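/- Let M ≅ ℤ^n be a lattice, λ : M → ℤ a group homomorphism, and consider the filtration of R = ℤ[M] by submodules R_{≥w} spanned by monomials q^β with λ(β) ≥ w. If f = ∏_{β∈S}(1 − q^β) with λ(β) ≠ 0 for every β in the finite set S, and v is the minimal λ-weight of a monomial appearing in f, then the leading term of f in the associated graded gr_v R is ±q^γ for a single character γ with λ(γ) = v; in particular multiplication by f induces an isomorphism gr_w R → gr_{w+v} R for every w. -/

import Mathlib

/-!
Say `f ≡ c q^γ` when `f - c q^γ ∈ R_{≥λ(γ)+1}`. This relation is multiplicative, and each factor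
`1 - q^β` with `λ(β) ≠ 0` satisfies it with `c = ±1` (take `γ = 0` if `λ(β) > 0`, `γ = β` if
`λ(β) < 0`). Hence `f ≡ ±q^γ`, so `λ(γ)` is the minimal weight `v`, and on `gr_w R` multiplication
by `f` agrees with multiplication by the unit `±q^γ`, whose inverse `±q^{-γ}` gives the inverse map.
-/

open Finsupp

/-- Membership in the filtration step `R_{≥w}` of `R = ℤ[M]`: all monomials of `x` have
`λ`-weight at least `w`. -/
def inFil (n : ℕ) (lam : (Fin n → ℤ) →+ ℤ) (w : ℤ)
    (x : AddMonoidAlgebra ℤ (Fin n → ℤ)) : Prop :=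
  ∀ β ∈ x.coeff.support, w ≤ lam β

section Filtration

variable {n : ℕ} {lam : (Fin n → ℤ) →+ ℤ} {v w : ℤ} {x y : AddMonoidAlgebra ℤ (Fin n → ℤ)}

lemma inFil.coeff_eq_zero (hx : inFil n lam w x) {β : Fin n → ℤ} (hβ : lam β < w) :
    x.coeff β = 0 :=
  Finsupp.notMem_support_iff.mp fun hmem => (hx β hmem).not_gt hβ

lemma inFil.mono (hx : inFil n lam w x) (h : v ≤ w) : inFil n lam v x :=
  fun β hβ => h.trans (hx β hβ)

lemma inFil.add (hx : inFil n lam w x) (hy : inFil n lam w y) : inFil n lam w (x + y) := by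
  intro β hβ
  rcases Finset.mem_union.mp (Finsupp.support_add hβ) with h | h
  exacts [hx β h, hy β h]

lemma inFil.mul (hx : inFil n lam v x) (hy : inFil n lam w y) : inFil n lam (v + w) (x * y) := by
  classical
  intro β hβ
  obtain ⟨a, ha, b, hb, rfl⟩ := Finset.mem_add.mp (AddMonoidAlgebra.support_coeff_mul_subset x y hβ)
  rw [map_add]
  exact add_le_add (hx a ha) (hy b hb)

lemma inFil_single {γ : Fin n → ℤ} (h : w ≤ lam γ) (c : ℤ) :
    inFil n lam w (AddMonoidAlgebra.single γ c) := by
  intro β hβ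
  rwa [Finset.mem_singleton.mp (Finsupp.support_single_subset hβ)]

end Filtration

namespace AddMonoidAlgebra

variable {n : ℕ} {lam : (Fin n → ℤ) →+ ℤ} {w : ℤ} {x y f g : AddMonoidAlgebra ℤ (Fin n → ℤ)}

def IsLeadingTerm (lam : (Fin n → ℤ) →+ ℤ) (f : AddMonoidAlgebra ℤ (Fin n → ℤ))
    (γ : Fin n → ℤ) (c : ℤ) : Prop :=
  inFil n lam (lam γ + 1) (f - single γ c)

namespace IsLeadingTerm

variable {γ γ' : Fin n → ℤ} {c c' : ℤ}

lemma inFil_weight (h : IsLeadingTerm lam f γ c) : inFil n lam (lam γ) f := by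
  simpa using (h.mono (le_add_of_nonneg_right zero_le_one)).add (inFil_single le_rfl c)

lemma coeff_eq (h : IsLeadingTerm lam f γ c) : f.coeff γ = c := by
  have := h.coeff_eq_zero (lt_add_one (lam γ))
  rwa [coeff_sub, Finsupp.sub_apply, coeff_single, Finsupp.single_eq_same, sub_eq_zero] at this

lemma eq_of_mem_support (h : IsLeadingTerm lam f γ c) {β : Fin n → ℤ} (hβ : β ∈ f.coeff.support)
    (hle : lam β ≤ lam γ) : β = γ := by
  classical
  by_contra hne
  have := h.coeff_eq_zero (Int.lt_add_one_iff.mpr hle)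
  rw [coeff_sub, Finsupp.sub_apply, coeff_single, Finsupp.single_eq_of_ne hne, sub_zero] at this
  exact Finsupp.mem_support_iff.mp hβ this

lemma mul (hf : IsLeadingTerm lam f γ c) (hg : IsLeadingTerm lam g γ' c') :
    IsLeadingTerm lam (f * g) (γ + γ') (c * c') := by
  have hsplit : f * g - single (γ + γ') (c * c') =
      (f - single γ c) * g + single γ c * (g - single γ' c') := by
    rw [← single_mul_single]; ring
  unfold IsLeadingTerm
  rw [hsplit, map_add]
  exact (inFil.mul hf hg.inFil_weight).mono (by omega) |>.add
    (((inFil_single le_rfl c).mul hg).mono (by omega))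

lemma coeff_mul_add (h : IsLeadingTerm lam f γ c) (hx : inFil n lam w x) {β : Fin n → ℤ}
    (hβ : lam β = w) : (f * x).coeff (γ + β) = c * x.coeff β := by
  have hrest : ((f - single γ c) * x).coeff (γ + β) = 0 :=
    (inFil.mul h hx).coeff_eq_zero (by rw [map_add]; omega)
  rw [show f * x = single γ c * x + (f - single γ c) * x by ring, coeff_add, Finsupp.add_apply,
    hrest, add_zero, coeff_single_mul_apply, neg_add_cancel_left]

lemma inFil_mul (h : IsLeadingTerm lam f γ c) (hx : inFil n lam w x) :
    inFil n lam (w + lam γ) (f * x) :=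
  (h.inFil_weight.mul hx).mono (add_comm _ _).le

lemma exists_inFil_mul_sub (h : IsLeadingTerm lam f γ c) (hc : IsUnit c)
    (hy : inFil n lam (w + lam γ) y) :
    ∃ x, inFil n lam w x ∧ inFil n lam (w + lam γ + 1) (f * x - y) := by
  set u := single (-γ) (↑hc.unit⁻¹ : ℤ)
  have hu : inFil n lam (-lam γ) u := inFil_single (by rw [map_neg]) _
  have hinv : single γ c * u = 1 := by
    rw [single_mul_single, add_neg_cancel, IsUnit.mul_val_inv, one_def]
  refine ⟨u * y, (hu.mul hy).mono (by omega), ?_⟩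
  have hsplit : f * (u * y) - y = (f - single γ c) * u * y := by
    linear_combination y * hinv
  rw [hsplit]
  exact ((inFil.mul h hu).mul hy).mono (by omega)

lemma inFil_of_inFil_mul (h : IsLeadingTerm lam f γ c) (hc : IsUnit c) (hx : inFil n lam w x)
    (hfx : inFil n lam (w + lam γ + 1) (f * x)) : inFil n lam (w + 1) x := by
  intro β hβ
  by_contra hlt
  have hw : lam β = w := le_antisymm (by omega) (hx β hβ)
  have hzero := hfx.coeff_eq_zero (β := γ + β) (by rw [map_add]; omega)
  rw [h.coeff_mul_add hx hw, hc.mul_right_eq_zero] at hzero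
  exact Finsupp.mem_support_iff.mp hβ hzero

end IsLeadingTerm

lemma isLeadingTerm_one : IsLeadingTerm lam (1 : AddMonoidAlgebra ℤ (Fin n → ℤ)) 0 1 := by
  simp [IsLeadingTerm, one_def, inFil]

lemma exists_isLeadingTerm_one_sub_single {β : Fin n → ℤ} (hβ : lam β ≠ 0) :
    ∃ γ c, IsUnit c ∧ IsLeadingTerm lam (1 - single β 1) γ c := by
  rcases hβ.lt_or_gt with hneg | hpos
  · refine ⟨β, -1, isUnit_one.neg, ?_⟩
    rw [IsLeadingTerm, show (1 : AddMonoidAlgebra ℤ (Fin n → ℤ)) - single β 1 - single β (-1)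
      = single 0 1 by rw [single_neg, sub_neg_eq_add, sub_add_cancel, one_def]]
    exact inFil_single (by rw [map_zero]; omega) 1
  · refine ⟨0, 1, isUnit_one, ?_⟩
    rw [IsLeadingTerm, ← one_def, sub_sub_cancel_left, ← single_neg]
    exact inFil_single (by rw [map_zero]; omega) (-1)

lemma exists_isLeadingTerm_prod_one_sub_single (S : Finset (Fin n → ℤ))
    (hS : ∀ β ∈ S, lam β ≠ 0) :
    ∃ γ c, IsUnit c ∧ IsLeadingTerm lam (∏ β ∈ S, (1 - single β 1)) γ c := by
  classical
  induction S using Finset.induction with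
  | empty => exact ⟨0, 1, isUnit_one, by simpa using isLeadingTerm_one⟩
  | insert a s ha ih =>
    obtain ⟨γ, c, hc, h⟩ := exists_isLeadingTerm_one_sub_single (hS a (Finset.mem_insert_self a s))
    obtain ⟨γ', c', hc', h'⟩ := ih fun β hβ => hS β (Finset.mem_insert_of_mem hβ)
    exact ⟨γ + γ', c * c', hc.mul hc', by rw [Finset.prod_insert ha]; exact h.mul h'⟩

end AddMonoidAlgebra

/-- For `f = ∏_{β∈S}(1 - q^β)` with `λ(β) ≠ 0` for all `β ∈ S`, and `v` the minimal
`λ`-weight of a monomial of `f`: the leading term of `f` in `gr_v R` is `± q^γ` for a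
single character `γ` with `λ(γ) = v`; and multiplication by `f` induces an isomorphism
`gr_w R → gr_{w+v} R` for every `w` (expressed elementwise: `f · R_{≥w} ⊆ R_{≥w+v}`,
surjectivity modulo `R_{≥w+v+1}`, and injectivity modulo `R_{≥w+1}`). -/
theorem stmt_1 (n : ℕ) (S : Finset (Fin n → ℤ))
    (lam : (Fin n → ℤ) →+ ℤ)
    (hlam : ∀ β ∈ S, lam β ≠ 0)
    (f : AddMonoidAlgebra ℤ (Fin n → ℤ))
    (hf : f = ∏ β ∈ S, (1 - AddMonoidAlgebra.single β 1))
    (v : ℤ)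
    (hv₁ : ∀ β ∈ f.coeff.support, v ≤ lam β)
    (hv₂ : ∃ β ∈ f.coeff.support, lam β = v) :
    (∃ γ : Fin n → ℤ, lam γ = v ∧ (f.coeff γ = 1 ∨ f.coeff γ = -1) ∧
      ∀ β ∈ f.coeff.support, lam β = v → β = γ) ∧
    (∀ w : ℤ,
      (∀ x, inFil n lam w x → inFil n lam (w + v) (f * x)) ∧
      (∀ y, inFil n lam (w + v) y →
        ∃ x, inFil n lam w x ∧ inFil n lam (w + v + 1) (f * x - y)) ∧
      (∀ x, inFil n lam w x → inFil n lam (w + v + 1) (f * x) →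
        inFil n lam (w + 1) x)) := by
  obtain ⟨γ, c, hc, hlead⟩ :=
    AddMonoidAlgebra.exists_isLeadingTerm_prod_one_sub_single S hlam
  rw [← hf] at hlead
  have hγ : γ ∈ f.coeff.support := by
    rw [Finsupp.mem_support_iff, hlead.coeff_eq]; exact hc.ne_zero
  obtain rfl : lam γ = v := by
    obtain ⟨β, hβ, rfl⟩ := hv₂
    exact le_antisymm (hlead.inFil_weight β hβ) (hv₁ γ hγ)
  refine ⟨⟨γ, rfl, hlead.coeff_eq ▸ Int.isUnit_iff.mp hc,
    fun β hβ hβγ => hlead.eq_of_mem_support hβ hβγ.le⟩,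
    fun w => ⟨fun x => hlead.inFil_mul, fun y => hlead.exists_inFil_mul_sub hc,
      fun x => hlead.inFil_of_inFil_mul hc⟩⟩
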